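/- arXiv:2405.07412 — 4 statements merged into one kernel-verified Lean document; each statement's English description precedes it below -/
import Mathlib

section
/- The BAE-informed conditional covariance C_post = (C_{vv}⁻¹ + F̃ᵀ C_{η|v}⁻¹ F̃)⁻¹, where F̃ = Fs + C_{εv} C_{vv}⁻¹ and C_{η|v} = C_{ee} + C_{εε} - C_{εv} C_{vv}⁻¹ C_{vε}, is independent of the choice of linear surrogate Fs. That is, if Fs₁ and Fs₂ are two matrices with ε_i(v) = F(v) - Fs_i v and corresponding statistics, then the two resulting C_post matrices are equal. -/
open MeasureTheory Matrix

/-- Mean vector of a random vector `f` of the parameter `v` distributed according to `μ`. -/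
noncomputable def mvec {n k : ℕ} (μ : Measure (Fin n → ℝ)) (f : (Fin n → ℝ) → Fin k → ℝ) :
    Fin k → ℝ := fun i => ∫ v, f v i ∂μ

/-- (Cross-)covariance matrix of random vectors `f` and `g` of the parameter `v ∼ μ`. -/
noncomputable def covM {n k l : ℕ} (μ : Measure (Fin n → ℝ))
    (f : (Fin n → ℝ) → Fin k → ℝ) (g : (Fin n → ℝ) → Fin l → ℝ) :
    Matrix (Fin k) (Fin l) ℝ :=
  Matrix.of fun i j => ∫ v, (f v i - mvec μ f i) * (g v j - mvec μ g j) ∂μ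

set_option linter.unusedSectionVars false

section aux
variable {n : ℕ} {μ : Measure (Fin n → ℝ)} [IsProbabilityMeasure μ]

lemma integ_center {f g : (Fin n → ℝ) → ℝ} (hf : Integrable f μ) (hg : Integrable g μ)
    (hfg : Integrable (fun v => f v * g v) μ) (a b : ℝ) :
    Integrable (fun v => (f v - a) * (g v - b)) μ := by
  have h : (fun v => (f v - a) * (g v - b))
      = fun v => f v * g v - b * f v - (a * g v - a * b) := by funext v; ring
  rw [h]
  exact (hfg.sub (hf.const_mul b)).sub ((hg.const_mul a).sub (integrable_const _))

lemma covM_transpose {k l : ℕ} (f : (Fin n → ℝ) → Fin k → ℝ) (g : (Fin n → ℝ) → Fin l → ℝ) :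
    (covM μ f g)ᵀ = covM μ g f := by
  ext i j
  simp only [covM, transpose_apply, of_apply]
  congr 1; funext v; ring

lemma mvec_eps {d : ℕ} (F : (Fin n → ℝ) → Fin d → ℝ)
    (hF : ∀ i, Integrable (fun v => F v i) μ)
    (hv : ∀ i, Integrable (fun v : Fin n → ℝ => v i) μ)
    (Fs : Matrix (Fin d) (Fin n) ℝ) (i : Fin d) :
    mvec μ (fun w => F w - Fs.mulVec w) i = mvec μ F i - Fs.mulVec (mvec μ id) i := by
  simp only [mvec, Pi.sub_apply, mulVec, dotProduct, id]
  rw [integral_sub (hF i) (integrable_finset_sum _ fun k _ => (hv k).const_mul _),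
    integral_finset_sum _ fun k _ => (hv k).const_mul _]
  simp [integral_const_mul]

lemma covM_eps_left {d k : ℕ} (F : (Fin n → ℝ) → Fin d → ℝ) (g : (Fin n → ℝ) → Fin k → ℝ)
    (hF : ∀ i, Integrable (fun v => F v i) μ)
    (hv : ∀ i, Integrable (fun v : Fin n → ℝ => v i) μ)
    (hg : ∀ j, Integrable (fun v => g v j) μ)
    (hFg : ∀ i j, Integrable (fun v => F v i * g v j) μ)
    (hvg : ∀ i j, Integrable (fun v : Fin n → ℝ => v i * g v j) μ)
    (Fs : Matrix (Fin d) (Fin n) ℝ) :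
    covM μ (fun w => F w - Fs.mulVec w) g = covM μ F g - Fs * covM μ id g := by
  ext i j
  simp only [covM, of_apply, Matrix.sub_apply, Matrix.mul_apply]
  have key : ∀ v : Fin n → ℝ,
      ((fun w => F w - Fs.mulVec w) v i - mvec μ (fun w => F w - Fs.mulVec w) i)
          * (g v j - mvec μ g j)
        = (F v i - mvec μ F i) * (g v j - mvec μ g j)
          - ∑ x, Fs i x * ((v x - mvec μ id x) * (g v j - mvec μ g j)) := by
    intro v
    rw [mvec_eps F hF hv Fs i]
    simp only [Pi.sub_apply, mulVec, dotProduct, id]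
    have h1 : ∑ x, Fs i x * ((v x - mvec μ id x) * (g v j - mvec μ g j))
        = (∑ x, Fs i x * v x - ∑ x, Fs i x * mvec μ id x) * (g v j - mvec μ g j) := by
      rw [← Finset.sum_sub_distrib, Finset.sum_mul]
      exact Finset.sum_congr rfl fun x _ => by ring
    rw [h1]
    ring
  rw [integral_congr_ae (Filter.Eventually.of_forall key)]
  rw [integral_sub (integ_center (hF i) (hg j) (hFg i j) _ _)
    (integrable_finset_sum _ fun x _ =>
      ((integ_center (hv x) (hg j) (hvg x j) _ _).const_mul _)),
    integral_finset_sum _ fun x _ =>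
      ((integ_center (hv x) (hg j) (hvg x j) _ _).const_mul _)]
  simp only [integral_const_mul, covM, of_apply, id]

end aux


/-- The BAE-corrected map `F̃ = Fs + C_{εv} C_{vv}⁻¹` for surrogate `Fs` of `F`. -/
noncomputable def tildeF {n d : ℕ} (μ : Measure (Fin n → ℝ)) (F : (Fin n → ℝ) → Fin d → ℝ)
    (Fs : Matrix (Fin d) (Fin n) ℝ) : Matrix (Fin d) (Fin n) ℝ :=
  Fs + covM μ (fun w => F w - Fs.mulVec w) id * (covM μ id id)⁻¹

/-- The BAE total-error covariance `C_{η|v} = C_{ee} + C_{εε} - C_{εv} C_{vv}⁻¹ C_{vε}`. -/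
noncomputable def CetaGv {n d : ℕ} (μ : Measure (Fin n → ℝ)) (F : (Fin n → ℝ) → Fin d → ℝ)
    (Fs : Matrix (Fin d) (Fin n) ℝ) (Cee : Matrix (Fin d) (Fin d) ℝ) :
    Matrix (Fin d) (Fin d) ℝ :=
  Cee + covM μ (fun w => F w - Fs.mulVec w) (fun w => F w - Fs.mulVec w)
    - covM μ (fun w => F w - Fs.mulVec w) id * (covM μ id id)⁻¹
      * (covM μ (fun w => F w - Fs.mulVec w) id)ᵀ

section main
variable {n d : ℕ} {μ : Measure (Fin n → ℝ)} [IsProbabilityMeasure μ]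
  {F : (Fin n → ℝ) → Fin d → ℝ}

lemma covM_eps_id (hF : ∀ i, Integrable (fun v => F v i) μ)
    (hv : ∀ i, Integrable (fun v : Fin n → ℝ => v i) μ)
    (hFv : ∀ i j, Integrable (fun v => F v i * v j) μ)
    (hvv : ∀ i j, Integrable (fun v : Fin n → ℝ => v i * v j) μ)
    (Fs : Matrix (Fin d) (Fin n) ℝ) :
    covM μ (fun w => F w - Fs.mulVec w) id = covM μ F id - Fs * covM μ id id :=
  covM_eps_left F id hF hv hv hFv hvv Fs

lemma tildeF_eq (hF : ∀ i, Integrable (fun v => F v i) μ)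
    (hv : ∀ i, Integrable (fun v : Fin n → ℝ => v i) μ)
    (hFv : ∀ i j, Integrable (fun v => F v i * v j) μ)
    (hvv : ∀ i j, Integrable (fun v : Fin n → ℝ => v i * v j) μ)
    (hCvv : IsUnit (covM μ (n := n) id id).det)
    (Fs : Matrix (Fin d) (Fin n) ℝ) :
    tildeF μ F Fs = covM μ F id * (covM μ id id)⁻¹ := by
  rw [tildeF, covM_eps_id hF hv hFv hvv, Matrix.sub_mul, Matrix.mul_assoc,
    Matrix.mul_nonsing_inv _ hCvv, Matrix.mul_one]
  abel

lemma CetaGv_eq (hF : ∀ i, Integrable (fun v => F v i) μ)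
    (hv : ∀ i, Integrable (fun v : Fin n → ℝ => v i) μ)
    (hFv : ∀ i j, Integrable (fun v => F v i * v j) μ)
    (hvv : ∀ i j, Integrable (fun v : Fin n → ℝ => v i * v j) μ)
    (hFF : ∀ i j, Integrable (fun v => F v i * F v j) μ)
    (hCvv : IsUnit (covM μ (n := n) id id).det)
    (Cee : Matrix (Fin d) (Fin d) ℝ) (Fs : Matrix (Fin d) (Fin n) ℝ) :
    CetaGv μ F Fs Cee
      = Cee + covM μ F F - covM μ F id * (covM μ id id)⁻¹ * (covM μ F id)ᵀ := by
  -- integrability of products with ε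
  have hεg : ∀ (k : ℕ) (g : (Fin n → ℝ) → Fin k → ℝ)
      (hgF : ∀ i j, Integrable (fun v => g v i * F v j) μ)
      (hgv : ∀ i j, Integrable (fun v => g v i * v j) μ),
      ∀ i j, Integrable (fun v => g v i * (F v j - Fs.mulVec v j)) μ := by
    intro k g hgF hgv i j
    have h : (fun v => g v i * (F v j - Fs.mulVec v j))
        = fun v => g v i * F v j - ∑ x, Fs j x * (g v i * v x) := by
      funext v
      simp only [mulVec, dotProduct]
      rw [mul_sub, Finset.mul_sum]
      congr 1
      exact Finset.sum_congr rfl fun x _ => by ring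
    rw [h]
    exact (hgF i j).sub (integrable_finset_sum _ fun x _ => (hgv i x).const_mul _)
  have hεint : ∀ j, Integrable (fun v => F v j - Fs.mulVec v j) μ := by
    intro j
    have h : (fun v => F v j - Fs.mulVec v j)
        = fun v => F v j - ∑ x, Fs j x * v x := by
      funext v; simp [mulVec, dotProduct]
    rw [h]
    exact (hF j).sub (integrable_finset_sum _ fun x _ => (hv x).const_mul _)
  -- covM ε ε
  have hεF : covM μ (fun w => F w - Fs.mulVec w) F = covM μ F F - Fs * covM μ id F :=
    covM_eps_left F F hF hv hF hFF (fun i j => by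
      have := hFv j i
      simpa [mul_comm] using this) Fs
  have hεε : covM μ (fun w => F w - Fs.mulVec w) (fun w => F w - Fs.mulVec w)
      = covM μ F (fun w => F w - Fs.mulVec w)
        - Fs * covM μ id (fun w => F w - Fs.mulVec w) :=
    covM_eps_left F _ hF hv (fun j => hεint j)
      (hεg d F hFF hFv) (hεg n id (fun i j => by simpa [mul_comm] using hFv j i) hvv) Fs
  have hFε : covM μ F (fun w => F w - Fs.mulVec w)
      = covM μ F F - covM μ F id * Fsᵀ := by
    rw [← covM_transpose _ F, hεF, transpose_sub, covM_transpose, transpose_mul,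
      covM_transpose]
  have hidε : covM μ id (fun w => F w - Fs.mulVec w)
      = covM μ id F - covM μ id id * Fsᵀ := by
    rw [← covM_transpose _ id, covM_eps_id hF hv hFv hvv, transpose_sub, covM_transpose,
      transpose_mul, covM_transpose]
  set A := covM μ F id with hA
  set C := covM μ (n := n) id id with hC
  have hAt : covM μ id F = Aᵀ := (covM_transpose F id).symm
  have hCt : Cᵀ = C := covM_transpose id id
  have hC1 : C * C⁻¹ = 1 := Matrix.mul_nonsing_inv _ hCvv
  have hC2 : C⁻¹ * C = 1 := Matrix.nonsing_inv_mul _ hCvv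
  rw [CetaGv, hεε, hFε, hidε, covM_eps_id hF hv hFv hvv, hAt, ← hA, ← hC]
  have expand : (A - Fs * C) * C⁻¹ * (A - Fs * C)ᵀ
      = A * C⁻¹ * Aᵀ - A * Fsᵀ - Fs * Aᵀ + Fs * C * Fsᵀ := by
    rw [transpose_sub, transpose_mul, hCt]
    rw [Matrix.sub_mul, Matrix.sub_mul, Matrix.mul_sub, Matrix.mul_sub]
    have h1 : A * C⁻¹ * (C * Fsᵀ) = A * Fsᵀ := by
      rw [Matrix.mul_assoc A, ← Matrix.mul_assoc C⁻¹, hC2, Matrix.one_mul]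
    have h2 : Fs * C * C⁻¹ * Aᵀ = Fs * Aᵀ := by
      rw [Matrix.mul_assoc Fs, hC1, Matrix.mul_one]
    have h3 : Fs * C * C⁻¹ * (C * Fsᵀ) = Fs * C * Fsᵀ := by
      rw [Matrix.mul_assoc Fs, hC1, Matrix.mul_one, Matrix.mul_assoc]
    rw [h1, h2, h3]
    abel
  rw [expand]
  rw [Matrix.mul_sub Fs, ← Matrix.mul_assoc Fs C]
  abel

end main

/-- The BAE-informed posterior covariance
`C_post = (C_{vv}⁻¹ + F̃ᵀ C_{η|v}⁻¹ F̃)⁻¹` is independent of the choice of linear surrogate. -/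
theorem bae_posterior_covariance_invariance {n d : ℕ} (μ : Measure (Fin n → ℝ))
    [IsProbabilityMeasure μ] (F : (Fin n → ℝ) → Fin d → ℝ)
    (hF : ∀ i, Integrable (fun v => F v i) μ)
    (hv : ∀ i, Integrable (fun v : Fin n → ℝ => v i) μ)
    (hFv : ∀ i j, Integrable (fun v => F v i * v j) μ)
    (hvv : ∀ i j, Integrable (fun v : Fin n → ℝ => v i * v j) μ)
    (hFF : ∀ i j, Integrable (fun v => F v i * F v j) μ)
    (hCvv : IsUnit (covM μ id id).det)
    (Cee : Matrix (Fin d) (Fin d) ℝ) (hCee : Cee.PosDef)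
    (Fs₁ Fs₂ : Matrix (Fin d) (Fin n) ℝ)
    (hinv₁ : IsUnit (CetaGv μ F Fs₁ Cee).det)
    (hinv₂ : IsUnit (CetaGv μ F Fs₂ Cee).det) :
    ((covM μ id id)⁻¹ + (tildeF μ F Fs₁)ᵀ * (CetaGv μ F Fs₁ Cee)⁻¹ * tildeF μ F Fs₁)⁻¹
      = ((covM μ id id)⁻¹ + (tildeF μ F Fs₂)ᵀ * (CetaGv μ F Fs₂ Cee)⁻¹ * tildeF μ F Fs₂)⁻¹ := by
  rw [tildeF_eq hF hv hFv hvv hCvv Fs₁, tildeF_eq hF hv hFv hvv hCvv Fs₂,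
    CetaGv_eq hF hv hFv hvv hFF hCvv Cee Fs₁, CetaGv_eq hF hv hFv hvv hFF hCvv Cee Fs₂]
end

section
/- With A ∈ ℝᵈˣⁿ, C ≻ 0 in ℝⁿˣⁿ, Γ ≻ 0 in ℝᵈˣᵈ, the trace of the posterior covariance satisfies trace((C⁻¹ + Aᵀ Γ⁻¹ A)⁻¹) = trace(C) - trace((Γ + A C Aᵀ)⁻¹ A C² Aᵀ). Consequently, minimizing the A-optimality criterion trace((C⁻¹+AᵀΓ⁻¹A)⁻¹) is equivalent to maximizing trace((Γ + A C Aᵀ)⁻¹ A C² Aᵀ), which involves only d×d matrices. -/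
open Matrix

/-- Trace of the posterior covariance: the A-optimality criterion
`trace((C⁻¹+AᵀΓ⁻¹A)⁻¹)` equals `trace C` minus `trace((Γ + A C Aᵀ)⁻¹ A C² Aᵀ)`, so
minimizing the former is equivalent to maximizing the latter. -/
theorem trace_posterior_covariance {n d : ℕ}
    (A : Matrix (Fin d) (Fin n) ℝ) (C : Matrix (Fin n) (Fin n) ℝ)
    (Γ : Matrix (Fin d) (Fin d) ℝ) (hC : C.PosDef) (hΓ : Γ.PosDef) :
    ((C⁻¹ + Aᵀ * Γ⁻¹ * A)⁻¹).trace
      = C.trace - ((Γ + A * C * Aᵀ)⁻¹ * A * (C * C) * Aᵀ).trace := by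
  have hACAT : (A * C * Aᵀ).PosSemidef := by
    have := hC.posSemidef.mul_mul_conjTranspose_same A
    simpa using this
  have hS : (Γ + A * C * Aᵀ).PosDef := hΓ.add_posSemidef hACAT
  have hW := Matrix.add_mul_mul_inv_eq_sub (A := C⁻¹) (U := Aᵀ) (C := Γ⁻¹) (V := A)
    (hC.inv.isUnit) (hΓ.inv.isUnit)
    (by
      rw [Matrix.nonsing_inv_nonsing_inv _ ((Matrix.isUnit_iff_isUnit_det _).mp hΓ.isUnit), Matrix.nonsing_inv_nonsing_inv _ ((Matrix.isUnit_iff_isUnit_det _).mp hC.isUnit)]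
      exact hS.isUnit)
  rw [Matrix.nonsing_inv_nonsing_inv _ ((Matrix.isUnit_iff_isUnit_det _).mp hΓ.isUnit), Matrix.nonsing_inv_nonsing_inv _ ((Matrix.isUnit_iff_isUnit_det _).mp hC.isUnit)] at hW
  rw [hW, trace_sub]
  congr 1
  calc (C * Aᵀ * (Γ + A * C * Aᵀ)⁻¹ * A * C).trace
      = ((C * Aᵀ) * ((Γ + A * C * Aᵀ)⁻¹ * A * C)).trace := by simp only [Matrix.mul_assoc]
    _ = (((Γ + A * C * Aᵀ)⁻¹ * A * C) * (C * Aᵀ)).trace := trace_mul_comm _ _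
    _ = ((Γ + A * C * Aᵀ)⁻¹ * A * (C * C) * Aᵀ).trace := by simp only [Matrix.mul_assoc]
end

section
/- Posterior mean invariance: under the BAE approach with linear surrogate Fs, the approximate posterior mean v_post = C_post (F̃ᵀ C_{η|v}⁻¹ (d - e₀ - ε₀ + C_{εv} C_{vv}⁻¹ v₀) + C_{vv}⁻¹ v₀) is independent of the choice of Fs: for two surrogates Fs₁, Fs₂ the quantity d - e₀ - ε_{0,i} + C_{ε_i v}C_{vv}⁻¹ v₀ and the maps F̃_i, C_{η_i|v} all coincide, hence so do the posterior means. -/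
open MeasureTheory Matrix

lemma integrable_mulVec {n k : ℕ} {μ : Measure (Fin n → ℝ)}
    (hv : ∀ i, Integrable (fun v : Fin n → ℝ => v i) μ)
    (A : Matrix (Fin k) (Fin n) ℝ) (i : Fin k) :
    Integrable (fun v => A.mulVec v i) μ := by
  have : Integrable (fun v : Fin n → ℝ => ∑ j, A i j * v j) μ :=
    integrable_finset_sum _ (fun j _ => (hv j).const_mul (A i j))
  simpa [Matrix.mulVec, dotProduct] using this

lemma mvec_sub_mulVec {n k : ℕ} (μ : Measure (Fin n → ℝ))
    (f : (Fin n → ℝ) → Fin k → ℝ)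
    (hf : ∀ i, Integrable (fun v => f v i) μ)
    (hv : ∀ i, Integrable (fun v : Fin n → ℝ => v i) μ)
    (A : Matrix (Fin k) (Fin n) ℝ) :
    mvec μ (fun w => f w - A.mulVec w) = mvec μ f - A.mulVec (mvec μ id) := by
  funext i
  have hsum : Integrable (fun v : Fin n → ℝ => ∑ j, A i j * v j) μ :=
    integrable_finset_sum _ (fun j _ => (hv j).const_mul (A i j))
  simp only [mvec, Pi.sub_apply, Matrix.mulVec, dotProduct]
  rw [show (fun v => f v i - ∑ j, A i j * v j) = fun v => f v i - ∑ j, A i j * v j from rfl]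
  rw [integral_sub (hf i) hsum, integral_finset_sum _ (fun j _ => (hv j).const_mul (A i j))]
  simp [mvec, integral_const_mul]

lemma covM_symm {n k l : ℕ} (μ : Measure (Fin n → ℝ))
    (f : (Fin n → ℝ) → Fin k → ℝ) (g : (Fin n → ℝ) → Fin l → ℝ) :
    covM μ f g = (covM μ g f)ᵀ := by
  ext i j
  simp [covM, mul_comm]

lemma covM_eq {n k l : ℕ} {μ : Measure (Fin n → ℝ)} [IsProbabilityMeasure μ]
    {f : (Fin n → ℝ) → Fin k → ℝ} {g : (Fin n → ℝ) → Fin l → ℝ}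
    (hf : ∀ i, Integrable (fun v => f v i) μ)
    (hg : ∀ j, Integrable (fun v => g v j) μ)
    (hfg : ∀ i j, Integrable (fun v => f v i * g v j) μ)
    (i : Fin k) (j : Fin l) :
    covM μ f g i j = (∫ v, f v i * g v j ∂μ) - mvec μ f i * mvec μ g j := by
  have key : (fun v => (f v i - mvec μ f i) * (g v j - mvec μ g j))
      = fun v => (f v i * g v j - mvec μ f i * g v j)
          - (mvec μ g j * f v i - mvec μ f i * mvec μ g j) := by
    funext v; ring
  have hA : Integrable (fun v => f v i * g v j - mvec μ f i * g v j) μ :=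
    (hfg i j).sub ((hg j).const_mul _)
  have hB : Integrable (fun v => mvec μ g j * f v i - mvec μ f i * mvec μ g j) μ :=
    ((hf i).const_mul _).sub (integrable_const _)
  have hC : Integrable (fun v => mvec μ g j * f v i) μ := (hf i).const_mul _
  simp only [covM, Matrix.of_apply, key]
  rw [integral_sub hA hB, integral_sub (hfg i j) ((hg j).const_mul _),
    integral_sub hC (integrable_const _), integral_const_mul, integral_const_mul, integral_const]
  simp [mvec]
  ring

lemma covM_sub_left {n k l : ℕ} (μ : Measure (Fin n → ℝ)) [IsProbabilityMeasure μ]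
    (f : (Fin n → ℝ) → Fin k → ℝ) (g : (Fin n → ℝ) → Fin l → ℝ)
    (A : Matrix (Fin k) (Fin n) ℝ)
    (hf : ∀ i, Integrable (fun v => f v i) μ)
    (hv : ∀ i, Integrable (fun v : Fin n → ℝ => v i) μ)
    (hg : ∀ j, Integrable (fun v => g v j) μ)
    (hfg : ∀ i j, Integrable (fun v => f v i * g v j) μ)
    (hvg : ∀ i j, Integrable (fun v => v i * g v j) μ) :
    covM μ (fun w => f w - A.mulVec w) g = covM μ f g - A * covM μ id g := by
  have hε : ∀ i, Integrable (fun v => (f v - A.mulVec v) i) μ := fun i => by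
    have : Integrable (fun v => f v i - A.mulVec v i) μ :=
      (hf i).sub (integrable_mulVec hv A i)
    simpa using this
  have hsplit : ∀ i j, (fun v => (f v - A.mulVec v) i * g v j)
      = fun v => f v i * g v j - ∑ p, A i p * (v p * g v j) := by
    intro i j; funext v
    simp [Matrix.mulVec, dotProduct, Finset.sum_mul, sub_mul, mul_assoc]
  have hεg : ∀ i j, Integrable (fun v => (f v - A.mulVec v) i * g v j) μ := fun i j => by
    rw [hsplit]
    exact (hfg i j).sub (integrable_finset_sum _ fun p _ => (hvg p j).const_mul (A i p))
  ext i j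
  rw [covM_eq hε hg hεg, Matrix.sub_apply, covM_eq hf hg hfg, Matrix.mul_apply, hsplit,
    integral_sub (hfg i j) (integrable_finset_sum _ fun p _ => (hvg p j).const_mul (A i p)),
    integral_finset_sum _ (fun p _ => (hvg p j).const_mul (A i p)),
    mvec_sub_mulVec μ f hf hv A]
  simp only [Pi.sub_apply, integral_const_mul]
  have h3 : ∀ p, covM μ id g p j = (∫ v, v p * g v j ∂μ) - mvec μ id p * mvec μ g j :=
    fun p => covM_eq hv hg hvg p j
  simp only [h3, Matrix.mulVec, dotProduct, mul_sub, Finset.sum_sub_distrib,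
    sub_mul, Finset.sum_mul, mul_assoc]
  ring

/-- Invariance of the BAE posterior mean: the shifted data vector, the corrected map `F̃`,
the total-error covariance, and hence the posterior mean, are all independent of the choice
of linear surrogate. -/
theorem bae_posterior_mean_invariance {n d : ℕ} (μ : Measure (Fin n → ℝ))
    [IsProbabilityMeasure μ] (F : (Fin n → ℝ) → Fin d → ℝ)
    (hF : ∀ i, Integrable (fun v => F v i) μ)
    (hv : ∀ i, Integrable (fun v : Fin n → ℝ => v i) μ)
    (hFv : ∀ i j, Integrable (fun v => F v i * v j) μ)
    (hvv : ∀ i j, Integrable (fun v : Fin n → ℝ => v i * v j) μ)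
    (hFF : ∀ i j, Integrable (fun v => F v i * F v j) μ)
    (hCvv : IsUnit (covM μ id id).det)
    (Cee : Matrix (Fin d) (Fin d) ℝ)
    (data e₀ : Fin d → ℝ)
    (Fs₁ Fs₂ : Matrix (Fin d) (Fin n) ℝ)
    (hinv₁ : IsUnit (CetaGv μ F Fs₁ Cee).det)
    (hinv₂ : IsUnit (CetaGv μ F Fs₂ Cee).det) :
    (data - e₀ - mvec μ (fun w => F w - Fs₁.mulVec w)
        + (covM μ (fun w => F w - Fs₁.mulVec w) id * (covM μ id id)⁻¹).mulVec (mvec μ id)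
      = data - e₀ - mvec μ (fun w => F w - Fs₂.mulVec w)
        + (covM μ (fun w => F w - Fs₂.mulVec w) id * (covM μ id id)⁻¹).mulVec (mvec μ id))
    ∧ tildeF μ F Fs₁ = tildeF μ F Fs₂
    ∧ CetaGv μ F Fs₁ Cee = CetaGv μ F Fs₂ Cee
    ∧ (((covM μ id id)⁻¹ + (tildeF μ F Fs₁)ᵀ * (CetaGv μ F Fs₁ Cee)⁻¹ * tildeF μ F Fs₁)⁻¹).mulVec
        (((tildeF μ F Fs₁)ᵀ * (CetaGv μ F Fs₁ Cee)⁻¹).mulVec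
            (data - e₀ - mvec μ (fun w => F w - Fs₁.mulVec w)
              + (covM μ (fun w => F w - Fs₁.mulVec w) id * (covM μ id id)⁻¹).mulVec (mvec μ id))
          + (covM μ id id)⁻¹.mulVec (mvec μ id))
      = (((covM μ id id)⁻¹ + (tildeF μ F Fs₂)ᵀ * (CetaGv μ F Fs₂ Cee)⁻¹ * tildeF μ F Fs₂)⁻¹).mulVec
          (((tildeF μ F Fs₂)ᵀ * (CetaGv μ F Fs₂ Cee)⁻¹).mulVec
              (data - e₀ - mvec μ (fun w => F w - Fs₂.mulVec w)
                + (covM μ (fun w => F w - Fs₂.mulVec w) id * (covM μ id id)⁻¹).mulVec (mvec μ id))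
            + (covM μ id id)⁻¹.mulVec (mvec μ id)) := by
  set B := covM μ F id with hB
  set C := covM μ id id with hC
  set M := covM μ F F with hM
  have hCC : C * C⁻¹ = 1 := Matrix.mul_nonsing_inv _ hCvv
  have hC'C : C⁻¹ * C = 1 := Matrix.nonsing_inv_mul _ hCvv
  have hCt : Cᵀ = C := (covM_symm μ id id).symm
  -- basic integrability for ε
  have hvF : ∀ i j, Integrable (fun v => v i * F v j) μ := fun i j => by
    simpa [mul_comm] using hFv j i
  have hεv : ∀ A : Matrix (Fin d) (Fin n) ℝ,
      covM μ (fun w => F w - A.mulVec w) id = B - A * C := fun A =>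
    covM_sub_left μ F id A hF hv hv hFv hvv
  have hεF : ∀ A : Matrix (Fin d) (Fin n) ℝ,
      covM μ (fun w => F w - A.mulVec w) F = M - A * Bᵀ := fun A => by
    rw [covM_sub_left μ F F A hF hv hF hFF hvF, ← hM, covM_symm μ id F, ← hB]
  have hεint : ∀ (A : Matrix (Fin d) (Fin n) ℝ) j,
      Integrable (fun v => (fun w => F w - A.mulVec w) v j) μ := fun A j => by
    have : Integrable (fun v => F v j - A.mulVec v j) μ := (hF j).sub (integrable_mulVec hv A j)
    simpa using this
  have hFεint : ∀ (A : Matrix (Fin d) (Fin n) ℝ) i j,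
      Integrable (fun v => F v i * (fun w => F w - A.mulVec w) v j) μ := fun A i j => by
    have h1 : (fun v => F v i * (F v j - A.mulVec v j))
        = fun v => F v i * F v j - ∑ p, A j p * (F v i * v p) := by
      funext v
      simp [Matrix.mulVec, dotProduct, mul_sub, Finset.mul_sum]
      ring_nf
    have : Integrable (fun v => F v i * (F v j - A.mulVec v j)) μ := by
      rw [h1]
      exact (hFF i j).sub (integrable_finset_sum _ fun p _ => (hFv i p).const_mul (A j p))
    simpa using this
  have hvεint : ∀ (A : Matrix (Fin d) (Fin n) ℝ) i j,
      Integrable (fun v => v i * (fun w => F w - A.mulVec w) v j) μ := fun A i j => by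
    have h1 : (fun v : Fin n → ℝ => v i * (F v j - A.mulVec v j))
        = fun v => v i * F v j - ∑ p, A j p * (v i * v p) := by
      funext v
      simp [Matrix.mulVec, dotProduct, mul_sub, Finset.mul_sum]
      ring_nf
    have : Integrable (fun v : Fin n → ℝ => v i * (F v j - A.mulVec v j)) μ := by
      rw [h1]
      exact (hvF i j).sub (integrable_finset_sum _ fun p _ => (hvv i p).const_mul (A j p))
    simpa using this
  have hεε : ∀ A : Matrix (Fin d) (Fin n) ℝ,
      covM μ (fun w => F w - A.mulVec w) (fun w => F w - A.mulVec w)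
        = (M - A * Bᵀ)ᵀ - A * (B - A * C)ᵀ := fun A => by
    rw [covM_sub_left μ F (fun w => F w - A.mulVec w) A hF hv (hεint A) (hFεint A) (hvεint A),
      covM_symm μ F (fun w => F w - A.mulVec w), covM_symm μ id (fun w => F w - A.mulVec w),
      hεF A, hεv A]
  -- key reductions
  have hBCA : ∀ A : Matrix (Fin d) (Fin n) ℝ, (B - A * C) * C⁻¹ = B * C⁻¹ - A := fun A => by
    rw [Matrix.sub_mul, Matrix.mul_assoc, hCC, Matrix.mul_one]
  have key1 : ∀ A : Matrix (Fin d) (Fin n) ℝ,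
      data - e₀ - mvec μ (fun w => F w - A.mulVec w)
          + (covM μ (fun w => F w - A.mulVec w) id * C⁻¹).mulVec (mvec μ id)
        = data - e₀ - mvec μ F + (B * C⁻¹).mulVec (mvec μ id) := fun A => by
    rw [mvec_sub_mulVec μ F hF hv A, hεv A, hBCA A, Matrix.sub_mulVec]
    abel
  have key2 : ∀ A : Matrix (Fin d) (Fin n) ℝ, tildeF μ F A = B * C⁻¹ := fun A => by
    rw [tildeF, hεv A, ← hC, hBCA A]
    abel
  have key3 : ∀ A : Matrix (Fin d) (Fin n) ℝ,
      CetaGv μ F A Cee = Cee + Mᵀ - B * C⁻¹ * Bᵀ := fun A => by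
    have haux : B * C⁻¹ * (C * Aᵀ) = B * Aᵀ := by
      rw [Matrix.mul_assoc B, ← Matrix.mul_assoc C⁻¹, hC'C, Matrix.one_mul]
    rw [CetaGv, hεε A, hεv A, ← hC, hBCA A, Matrix.transpose_sub, Matrix.transpose_mul,
      Matrix.transpose_sub, Matrix.transpose_mul, Matrix.transpose_transpose, hCt,
      Matrix.mul_sub (B * C⁻¹ - A)]
    simp only [Matrix.mul_sub, Matrix.sub_mul, haux]
    abel
  refine ⟨(key1 Fs₁).trans (key1 Fs₂).symm, (key2 Fs₁).trans (key2 Fs₂).symm,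
    (key3 Fs₁).trans (key3 Fs₂).symm, ?_⟩
  rw [key1 Fs₁, key1 Fs₂, key2 Fs₁, key2 Fs₂, key3 Fs₁, key3 Fs₂]
end

section
/- Sample total-error covariance invariance: in the setting of the sample statistics, Ĉ_{εε} - Ĉ_{εv} Ĉ_{vv}⁻¹ Ĉ_{vε} = Ĉ_{FF} - Ĉ_{Fv} Ĉ_{vv}⁻¹ Ĉ_{vF} for every choice of linear surrogate Fs, where Ĉ_{εε} = (q-1)⁻¹ Σ_l (ε⁽ˡ⁾-ε̄)(ε⁽ˡ⁾-ε̄)ᵀ and Ĉ_{FF} is the sample covariance of the F(v⁽ˡ⁾). -/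
open Matrix Finset

noncomputable def sampleMean {q k : ℕ} (f : Fin q → Fin k → ℝ) : Fin k → ℝ :=
  (q : ℝ)⁻¹ • ∑ l, f l

noncomputable def sampleCov {q k m : ℕ} (f : Fin q → Fin k → ℝ) (g : Fin q → Fin m → ℝ) :
    Matrix (Fin k) (Fin m) ℝ :=
  ((q : ℝ) - 1)⁻¹ • ∑ l, Matrix.vecMulVec (f l - sampleMean f) (g l - sampleMean g)

lemma sampleMean_sub {q k : ℕ} (f g : Fin q → Fin k → ℝ) :
    sampleMean (fun l => f l - g l) = sampleMean f - sampleMean g := by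
  unfold sampleMean
  rw [Finset.sum_sub_distrib, smul_sub]

lemma sampleMean_mulVec {q n d : ℕ} (A : Matrix (Fin d) (Fin n) ℝ) (f : Fin q → Fin n → ℝ) :
    sampleMean (fun l => A.mulVec (f l)) = A.mulVec (sampleMean f) := by
  unfold sampleMean
  simp only [← Matrix.mulVecLin_apply, _root_.map_smul, map_sum]

lemma vecMulVec_sub_left {k m : ℕ} (a b : Fin k → ℝ) (c : Fin m → ℝ) :
    Matrix.vecMulVec (a - b) c = Matrix.vecMulVec a c - Matrix.vecMulVec b c := by
  ext i j; simp [Matrix.vecMulVec_apply]; ring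

lemma vecMulVec_mulVec_left {k m n : ℕ} (A : Matrix (Fin k) (Fin n) ℝ)
    (x : Fin n → ℝ) (y : Fin m → ℝ) :
    Matrix.vecMulVec (A.mulVec x) y = A * Matrix.vecMulVec x y := by
  ext i j
  simp [Matrix.vecMulVec_apply, Matrix.mul_apply, Matrix.mulVec, dotProduct, Finset.sum_mul,
    mul_assoc]

lemma sampleCov_transpose {q k m : ℕ} (f : Fin q → Fin k → ℝ) (g : Fin q → Fin m → ℝ) :
    (sampleCov f g)ᵀ = sampleCov g f := by
  unfold sampleCov
  ext i j
  simp [Matrix.sum_apply, Matrix.vecMulVec_apply, mul_comm]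

lemma sampleCov_sub_left {q k m : ℕ} (f h : Fin q → Fin k → ℝ) (g : Fin q → Fin m → ℝ) :
    sampleCov (fun l => f l - h l) g = sampleCov f g - sampleCov h g := by
  unfold sampleCov
  rw [sampleMean_sub, ← smul_sub, ← Finset.sum_sub_distrib]
  congr 1
  refine Finset.sum_congr rfl fun l _ => ?_
  rw [← vecMulVec_sub_left]
  congr 1
  ext i; simp only [Pi.sub_apply]; ring

lemma sampleCov_mulVec_left {q n m d : ℕ} (A : Matrix (Fin d) (Fin n) ℝ)
    (f : Fin q → Fin n → ℝ) (g : Fin q → Fin m → ℝ) :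
    sampleCov (fun l => A.mulVec (f l)) g = A * sampleCov f g := by
  unfold sampleCov
  rw [sampleMean_mulVec, Matrix.mul_smul, Matrix.mul_sum]
  congr 1
  refine Finset.sum_congr rfl fun l _ => ?_
  rw [← Matrix.mulVec_sub, vecMulVec_mulVec_left]

/-- Sample total-error covariance invariance:
`Ĉ_{εε} - Ĉ_{εv} Ĉ_{vv}⁻¹ Ĉ_{vε} = Ĉ_{FF} - Ĉ_{Fv} Ĉ_{vv}⁻¹ Ĉ_{vF}` for every surrogate. -/
theorem sample_total_error_covariance_invariance {q n d : ℕ} (hq : 2 ≤ q)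
    (v : Fin q → Fin n → ℝ) (F : (Fin n → ℝ) → Fin d → ℝ)
    (hCvv : IsUnit (sampleCov v v).det)
    (Fs : Matrix (Fin d) (Fin n) ℝ) :
    sampleCov (fun l => F (v l) - Fs.mulVec (v l)) (fun l => F (v l) - Fs.mulVec (v l))
        - sampleCov (fun l => F (v l) - Fs.mulVec (v l)) v * (sampleCov v v)⁻¹
          * (sampleCov (fun l => F (v l) - Fs.mulVec (v l)) v)ᵀ
      = sampleCov (fun l => F (v l)) (fun l => F (v l))
        - sampleCov (fun l => F (v l)) v * (sampleCov v v)⁻¹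
          * (sampleCov (fun l => F (v l)) v)ᵀ := by
  set Cvv := sampleCov v v with hC
  have hinv1 : Cvv * Cvv⁻¹ = 1 := Matrix.mul_nonsing_inv _ hCvv
  have hinv2 : Cvv⁻¹ * Cvv = 1 := Matrix.nonsing_inv_mul _ hCvv
  have hsym : Cvvᵀ = Cvv := sampleCov_transpose v v
  have h3 : ∀ {k : ℕ} (g : Fin q → Fin k → ℝ),
      sampleCov (fun l => F (v l) - Fs.mulVec (v l)) g
        = sampleCov (fun l => F (v l)) g - Fs * sampleCov v g := by
    intro k g
    rw [sampleCov_sub_left, sampleCov_mulVec_left]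
  have h4 : ∀ {k : ℕ} (g : Fin q → Fin k → ℝ),
      sampleCov g (fun l => F (v l) - Fs.mulVec (v l))
        = sampleCov g (fun l => F (v l)) - sampleCov g v * Fsᵀ := by
    intro k g
    rw [← sampleCov_transpose, h3, Matrix.transpose_sub, sampleCov_transpose,
      Matrix.transpose_mul, sampleCov_transpose]
  have hvF : sampleCov v (fun l => F (v l)) = (sampleCov (fun l => F (v l)) v)ᵀ :=
    (sampleCov_transpose _ _).symm
  rw [h3, h3, h4, h4, hvF, ← hC]
  set B := sampleCov (fun l => F (v l)) v with hB
  set CFF := sampleCov (fun l => F (v l)) (fun l => F (v l)) with hF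
  -- pure matrix algebra now
  have expand : (B - Fs * Cvv) * Cvv⁻¹ * (B - Fs * Cvv)ᵀ
      = B * Cvv⁻¹ * Bᵀ - B * Fsᵀ - Fs * Bᵀ + Fs * Cvv * Fsᵀ := by
    simp only [Matrix.transpose_sub, Matrix.transpose_mul, hsym, Matrix.sub_mul, Matrix.mul_sub]
    rw [Matrix.mul_assoc Fs Cvv Cvv⁻¹, hinv1, Matrix.mul_one]
    rw [Matrix.mul_assoc B Cvv⁻¹ (Cvv * Fsᵀ), ← Matrix.mul_assoc Cvv⁻¹ Cvv Fsᵀ, hinv2,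
      Matrix.one_mul, ← Matrix.mul_assoc]
    abel
  rw [expand]
  simp only [Matrix.sub_mul, Matrix.mul_sub, Matrix.mul_assoc]
  abel
end
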